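/- For any positive integers i and k and any partition λ, u_{i+1}(u_{i+2}^k(u_{i+1}(u_i(λ)))) = u_{i+1}(u_{i+2}^k(u_i(u_{i+1}(λ)))), where u_{i+2}^k denotes applying u_{i+2} k times. Moreover this identity is derivable from the four relation types (1) u_i u_j = u_j u_i for |i−j| ≥ 2, (2) u_i u_{i+1} u_i = u_{i+1} u_i u_i, (3) u_{i+1} u_{i+1} u_i = u_{i+1} u_i u_{i+1}, (4) u_{i+1} u_{i+2} u_{i+1} u_i = u_{i+1} u_{i+2} u_i u_{i+1}. -/
import Mathlib


/-- A partition, represented by its column lengths (the conjugate):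
`c i` is the number of boxes in column `i`. -/
def IsPartition (c : ℕ+ → ℕ) : Prop :=
  (∀ i : ℕ+, c (i + 1) ≤ c i) ∧ ∃ N : ℕ+, ∀ i : ℕ+, N ≤ i → c i = 0

open Classical in
/-- The Schur operator `u_i`: add a box to column `i` if the result is a
partition, else `none` (representing `0`). -/
noncomputable def addBox (i : ℕ+) (c : ℕ+ → ℕ) : Option (ℕ+ → ℕ) :=
  if IsPartition (Function.update c i (c i + 1)) then
    some (Function.update c i (c i + 1))
  else none

/-- `u_x = u_{x_1} ∘ ⋯ ∘ u_{x_l}` for a word `x = x_1 ⋯ x_l`. -/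
noncomputable def schurWord (x : List ℕ+) (c : ℕ+ → ℕ) : Option (ℕ+ → ℕ) :=
  x.foldr (fun i o => o.bind (addBox i)) (some c)

/-- `α_i(x)`: the maximum over suffixes `s` of `x` of `w_{i+1}(s) - w_i(s)`. -/
def alpha (i : ℕ+) (x : List ℕ+) : ℕ :=
  (x.tails.map (fun s => s.count (i + 1) - s.count i)).foldr max 0

/-- One application of one of the defining relations (1)–(4) to a consecutive
subword. -/
inductive JStep : List ℕ+ → List ℕ+ → Prop
  | comm (p s : List ℕ+) (a b : ℕ+) (h : 2 ≤ |((a : ℕ) : ℤ) - ((b : ℕ) : ℤ)|) :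
      JStep (p ++ [a, b] ++ s) (p ++ [b, a] ++ s)
  | rel2 (p s : List ℕ+) (i : ℕ+) :
      JStep (p ++ [i, i + 1, i] ++ s) (p ++ [i + 1, i, i] ++ s)
  | rel3 (p s : List ℕ+) (i : ℕ+) :
      JStep (p ++ [i + 1, i + 1, i] ++ s) (p ++ [i + 1, i, i + 1] ++ s)
  | rel4 (p s : List ℕ+) (i : ℕ+) :
      JStep (p ++ [i + 1, i + 2, i + 1, i] ++ s) (p ++ [i + 1, i + 2, i, i + 1] ++ s)

/-- The congruence generated by relations (1)–(4). -/
def JEquiv : List ℕ+ → List ℕ+ → Prop := Relation.EqvGen JStep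

/-! ### Auxiliary material -/

section Aux

/-- Success condition for adding a box in column `i`. -/
def SchurCond (i : ℕ+) (c : ℕ+ → ℕ) : Prop := ∀ j : ℕ+, j + 1 = i → c i < c j

/-- Add a box in column `i`, unconditionally. -/
def bump (i : ℕ+) (c : ℕ+ → ℕ) : ℕ+ → ℕ := Function.update c i (c i + 1)

lemma pnat_ne_of_coe {a b : ℕ+} (h : (a : ℕ) ≠ (b : ℕ)) : a ≠ b :=
  fun h' => h (congrArg _ h')

lemma succ_ne (i : ℕ+) : i + 1 ≠ i := pnat_ne_of_coe (by push_cast; omega)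
lemma ne_succ (i : ℕ+) : i ≠ i + 1 := (succ_ne i).symm
lemma two_ne (i : ℕ+) : i + 2 ≠ i := pnat_ne_of_coe (by push_cast; omega)
lemma ne_two (i : ℕ+) : i ≠ i + 2 := (two_ne i).symm
lemma two_ne_one (i : ℕ+) : i + 2 ≠ i + 1 := pnat_ne_of_coe (by push_cast; omega)
lemma one_ne_two (i : ℕ+) : i + 1 ≠ i + 2 := (two_ne_one i).symm
lemma succ_succ (i : ℕ+) : i + 1 + 1 = i + 2 := by ring
lemma pnat_succ_inj {i j : ℕ+} (h : j + 1 = i + 1) : j = i := by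
  apply PNat.coe_injective
  have := congrArg (fun x : ℕ+ => (x : ℕ)) h; push_cast at this; omega

lemma bump_self (i : ℕ+) (c : ℕ+ → ℕ) : bump i c i = c i + 1 :=
  Function.update_self _ _ _

lemma bump_ne {j i : ℕ+} (h : j ≠ i) (c : ℕ+ → ℕ) : bump i c j = c j :=
  Function.update_of_ne h _ _

lemma isPartition_bump_iff {c : ℕ+ → ℕ} (hc : IsPartition c) (i : ℕ+) :
    IsPartition (bump i c) ↔ SchurCond i c := by
  constructor
  · intro h j hj
    have h1 := h.1 j
    rw [hj] at h1
    have hji : j ≠ i := fun h' => succ_ne j (by rw [h'] at hj ⊢; exact hj)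
    rw [bump_self, bump_ne hji] at h1
    omega
  · intro h
    refine ⟨fun j => ?_, ?_⟩
    · by_cases h1 : j + 1 = i
      · have hji : j ≠ i := fun h' => succ_ne j (by rw [h'] at h1 ⊢; exact h1)
        rw [h1, bump_self, bump_ne hji]
        exact h j h1
      · by_cases h2 : j = i
        · subst h2
          rw [bump_ne h1, bump_self]
          exact le_trans (hc.1 j) (Nat.le_succ _)
        · rw [bump_ne h1, bump_ne h2]
          exact hc.1 j
    · obtain ⟨N, hN⟩ := hc.2
      refine ⟨N + i, fun j hj => ?_⟩
      have h' : (N : ℕ) + (i : ℕ) ≤ (j : ℕ) := by exact_mod_cast hj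
      have hN1 := N.pos
      have hji : j ≠ i := pnat_ne_of_coe (by omega)
      have hNj : N ≤ j := by
        have : (N : ℕ) ≤ (j : ℕ) := by omega
        exact_mod_cast this
      rw [bump_ne hji]
      exact hN j hNj

lemma addBox_some {c : ℕ+ → ℕ} (hc : IsPartition c) {i : ℕ+} (h : SchurCond i c) :
    addBox i c = some (bump i c) := by
  have hp : IsPartition (Function.update c i (c i + 1)) := (isPartition_bump_iff hc i).mpr h
  rw [addBox, if_pos hp]
  rfl

lemma addBox_none {c : ℕ+ → ℕ} (hc : IsPartition c) {i : ℕ+} (h : ¬ SchurCond i c) :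
    addBox i c = none := by
  have hp : ¬ IsPartition (Function.update c i (c i + 1)) :=
    fun hp => h ((isPartition_bump_iff hc i).mp hp)
  rw [addBox, if_neg hp]

lemma isPartition_of_addBox {c d : ℕ+ → ℕ} {i : ℕ+} (h : addBox i c = some d) :
    IsPartition d := by
  by_cases hp : IsPartition (Function.update c i (c i + 1))
  · rw [addBox, if_pos hp] at h
    cases h
    exact hp
  · rw [addBox, if_neg hp] at h
    cases h

lemma bump_partition {c : ℕ+ → ℕ} (hc : IsPartition c) {i : ℕ+} (h : SchurCond i c) :
    IsPartition (bump i c) := (isPartition_bump_iff hc i).mpr h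

/-- A bump at an unrelated column does not affect the success condition. -/
lemma schurCond_bump {x y : ℕ+} (h1 : x ≠ y) (h2 : x + 1 ≠ y) (c : ℕ+ → ℕ) :
    SchurCond y (bump x c) ↔ SchurCond y c := by
  have key : ∀ j : ℕ+, j + 1 = y → j ≠ x := by
    intro j hj h'; subst h'; exact h2 hj
  constructor <;> intro h j hj <;> have := h j hj
  · rwa [bump_ne h1.symm, bump_ne (key j hj)] at this
  · rwa [bump_ne h1.symm, bump_ne (key j hj)]

/-- `u_{i+1}` always succeeds right after `u_i`. -/
lemma schurCond_succ_bump {c : ℕ+ → ℕ} (hc : IsPartition c) (i : ℕ+) :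
    SchurCond (i + 1) (bump i c) := by
  intro j hj
  rw [pnat_succ_inj hj, bump_ne (succ_ne i), bump_self]
  exact Nat.lt_succ_of_le (hc.1 i)

/-- `u_{i+2}` always succeeds right after `u_{i+1}`. -/
lemma schurCond_succ2_bump {c : ℕ+ → ℕ} (hc : IsPartition c) (i : ℕ+) :
    SchurCond (i + 2) (bump (i + 1) c) := by
  intro j hj
  rw [← succ_succ i] at hj
  rw [pnat_succ_inj hj, bump_ne (two_ne_one i), bump_self]
  have := hc.1 (i + 1)
  rw [succ_succ] at this
  omega

lemma schurWord_nil (c : ℕ+ → ℕ) : schurWord [] c = some c := rfl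

lemma schurWord_cons (a : ℕ+) (x : List ℕ+) (c : ℕ+ → ℕ) :
    schurWord (a :: x) c = (schurWord x c).bind (addBox a) := rfl

lemma foldr_none (x : List ℕ+) :
    x.foldr (fun i o => o.bind (addBox i)) none = none := by
  induction x with
  | nil => rfl
  | cons a t ih => simp [List.foldr, ih]

lemma schurWord_append (x y : List ℕ+) (c : ℕ+ → ℕ) :
    schurWord (x ++ y) c = (schurWord y c).bind (fun d => schurWord x d) := by
  rw [schurWord, List.foldr_append]
  have h0 : y.foldr (fun i o => o.bind (addBox i)) (some c) = schurWord y c := rfl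
  rw [h0]
  cases schurWord y c with
  | none => exact foldr_none x
  | some d => rfl

lemma schurWord_isPartition {x : List ℕ+} {c d : ℕ+ → ℕ}
    (h : schurWord x c = some d) (hc : IsPartition c) : IsPartition d := by
  induction x generalizing d with
  | nil => cases h; exact hc
  | cons a t ih =>
    rw [schurWord_cons] at h
    cases ht : schurWord t c with
    | none => rw [ht] at h; cases h
    | some e =>
      rw [ht] at h
      exact isPartition_of_addBox h

/-! ### Soundness of the four relations -/

lemma comm_sound {c : ℕ+ → ℕ} (hc : IsPartition c) (a b : ℕ+)
    (hab : 2 ≤ |((a : ℕ) : ℤ) - ((b : ℕ) : ℤ)|) :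
    schurWord [a, b] c = schurWord [b, a] c := by
  have hnat : (a : ℕ) + 2 ≤ b ∨ (b : ℕ) + 2 ≤ a := by
    rcases abs_cases (((a : ℕ) : ℤ) - ((b : ℕ) : ℤ)) with ⟨h1, _⟩ | ⟨h1, _⟩ <;>
      rw [h1] at hab
    · right; omega
    · left; omega
  have hba : a ≠ b := pnat_ne_of_coe (by omega)
  have h1 : a + 1 ≠ b := pnat_ne_of_coe (by push_cast; omega)
  have h2 : b + 1 ≠ a := pnat_ne_of_coe (by push_cast; omega)
  by_cases hCa : SchurCond a c <;> by_cases hCb : SchurCond b c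
  · have hpa := bump_partition hc hCa
    have hpb := bump_partition hc hCb
    have hCb' : SchurCond b (bump a c) := (schurCond_bump hba h1 c).mpr hCb
    have hCa' : SchurCond a (bump b c) := (schurCond_bump hba.symm h2 c).mpr hCa
    simp only [schurWord_cons, schurWord_nil, Option.bind_some,
      addBox_some hc hCa, addBox_some hc hCb,
      addBox_some hpa hCb', addBox_some hpb hCa']
    congr 1
    funext j
    by_cases hja : j = a <;> by_cases hjb : j = b
    · exact absurd (hja.symm.trans hjb) hba
    · simp [bump, Function.update_apply, hja, hjb, hba, Ne.symm hba]
    · simp [bump, Function.update_apply, hja, hjb, hba, Ne.symm hba]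
    · simp [bump, Function.update_apply, hja, hjb]
  · have hpa := bump_partition hc hCa
    have hCb' : ¬ SchurCond b (bump a c) := fun h => hCb ((schurCond_bump hba h1 c).mp h)
    simp [schurWord_cons, schurWord_nil, addBox_some hc hCa, addBox_none hc hCb,
      addBox_none hpa hCb']
  · have hpb := bump_partition hc hCb
    have hCa' : ¬ SchurCond a (bump b c) := fun h => hCa ((schurCond_bump hba.symm h2 c).mp h)
    simp [schurWord_cons, schurWord_nil, addBox_some hc hCb, addBox_none hc hCa,
      addBox_none hpb hCa']
  · simp [schurWord_cons, schurWord_nil, addBox_none hc hCa, addBox_none hc hCb]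

lemma rel2_sound {c : ℕ+ → ℕ} (hc : IsPartition c) (i : ℕ+) :
    schurWord [i, i + 1, i] c = schurWord [i + 1, i, i] c := by
  by_cases h1 : SchurCond i c
  case neg => simp [schurWord_cons, schurWord_nil, addBox_none hc h1]
  have hp1 : IsPartition (bump i c) := bump_partition hc h1
  have h2 : SchurCond (i + 1) (bump i c) := schurCond_succ_bump hc i
  have hp2 : IsPartition (bump (i + 1) (bump i c)) := bump_partition hp1 h2
  by_cases h3 : SchurCond i (bump i c)
  · have h3' : SchurCond i (bump (i + 1) (bump i c)) :=
      (schurCond_bump (succ_ne i) (by rw [succ_succ]; exact two_ne i) _).mpr h3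
    have hp3 : IsPartition (bump i (bump i c)) := bump_partition hp1 h3
    have h4 : SchurCond (i + 1) (bump i (bump i c)) := schurCond_succ_bump hp1 i
    simp only [schurWord_cons, schurWord_nil, Option.bind_some,
      addBox_some hc h1, addBox_some hp1 h2, addBox_some hp2 h3',
      addBox_some hp1 h3, addBox_some hp3 h4]
    congr 1
    funext j
    by_cases hja : j = i <;> by_cases hjb : j = i + 1
    · exact absurd (hja.symm.trans hjb) (ne_succ i)
    · simp [bump, Function.update_apply, hja, hjb, succ_ne, ne_succ]
    · simp [bump, Function.update_apply, hja, hjb, succ_ne, ne_succ]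
    · simp [bump, Function.update_apply, hja, hjb]
  · have h3' : ¬ SchurCond i (bump (i + 1) (bump i c)) := fun h =>
      h3 ((schurCond_bump (succ_ne i) (by rw [succ_succ]; exact two_ne i) _).mp h)
    simp [schurWord_cons, schurWord_nil, addBox_some hc h1, addBox_some hp1 h2,
      addBox_none hp2 h3', addBox_none hp1 h3]

lemma rel3_sound {c : ℕ+ → ℕ} (hc : IsPartition c) (i : ℕ+) :
    schurWord [i + 1, i + 1, i] c = schurWord [i + 1, i, i + 1] c := by
  by_cases h1 : SchurCond i c
  case neg =>
    by_cases hb : SchurCond (i + 1) c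
    · have hpb := bump_partition hc hb
      have h1' : ¬ SchurCond i (bump (i + 1) c) := fun h =>
        h1 ((schurCond_bump (ne_succ i).symm (by rw [succ_succ]; exact (ne_two i).symm) _).mp h)
      simp [schurWord_cons, schurWord_nil, addBox_none hc h1, addBox_some hc hb,
        addBox_none hpb h1']
    · simp [schurWord_cons, schurWord_nil, addBox_none hc h1, addBox_none hc hb]
  have hp1 : IsPartition (bump i c) := bump_partition hc h1
  have h2 : SchurCond (i + 1) (bump i c) := schurCond_succ_bump hc i
  have hp2 : IsPartition (bump (i + 1) (bump i c)) := bump_partition hp1 h2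
  by_cases hb : c (i + 1) < c i
  · have h3 : SchurCond (i + 1) (bump (i + 1) (bump i c)) := by
      intro j hj
      rw [pnat_succ_inj hj]
      simp only [bump, Function.update_apply]
      simp [succ_ne, ne_succ]
      omega
    have hCb : SchurCond (i + 1) c := by
      intro j hj
      rw [pnat_succ_inj hj]
      exact hb
    have hpb := bump_partition hc hCb
    have h1' : SchurCond i (bump (i + 1) c) :=
      (schurCond_bump (ne_succ i).symm (by rw [succ_succ]; exact (ne_two i).symm) _).mpr h1
    have hpb1 : IsPartition (bump i (bump (i + 1) c)) := bump_partition hpb h1'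
    have h4 : SchurCond (i + 1) (bump i (bump (i + 1) c)) := schurCond_succ_bump hpb i
    simp only [schurWord_cons, schurWord_nil, Option.bind_some,
      addBox_some hc h1, addBox_some hp1 h2, addBox_some hp2 h3,
      addBox_some hc hCb, addBox_some hpb h1', addBox_some hpb1 h4]
    congr 1
    funext j
    by_cases hja : j = i <;> by_cases hjb : j = i + 1
    · exact absurd (hja.symm.trans hjb) (ne_succ i)
    · simp [bump, Function.update_apply, hja, hjb, succ_ne, ne_succ]
    · simp [bump, Function.update_apply, hja, hjb, succ_ne, ne_succ]
    · simp [bump, Function.update_apply, hja, hjb]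
  · have h3 : ¬ SchurCond (i + 1) (bump (i + 1) (bump i c)) := by
      intro h
      have := h i rfl
      simp only [bump, Function.update_apply] at this
      simp [succ_ne, ne_succ] at this
      omega
    have hCb : ¬ SchurCond (i + 1) c := fun h => hb (h i rfl)
    simp [schurWord_cons, schurWord_nil, addBox_some hc h1, addBox_some hp1 h2,
      addBox_none hp2 h3, addBox_none hc hCb]

lemma rel4_sound {c : ℕ+ → ℕ} (hc : IsPartition c) (i : ℕ+) :
    schurWord [i + 1, i + 2, i + 1, i] c = schurWord [i + 1, i + 2, i, i + 1] c := by
  by_cases h1 : SchurCond i c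
  case neg =>
    by_cases hb : SchurCond (i + 1) c
    · have hpb := bump_partition hc hb
      have h1' : ¬ SchurCond i (bump (i + 1) c) := fun h =>
        h1 ((schurCond_bump (ne_succ i).symm (by rw [succ_succ]; exact (ne_two i).symm) _).mp h)
      simp [schurWord_cons, schurWord_nil, addBox_none hc h1, addBox_some hc hb,
        addBox_none hpb h1']
    · simp [schurWord_cons, schurWord_nil, addBox_none hc h1, addBox_none hc hb]
  have hp1 : IsPartition (bump i c) := bump_partition hc h1
  have h2 : SchurCond (i + 1) (bump i c) := schurCond_succ_bump hc i
  have hp2 : IsPartition (bump (i + 1) (bump i c)) := bump_partition hp1 h2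
  have h3 : SchurCond (i + 2) (bump (i + 1) (bump i c)) := schurCond_succ2_bump hp1 i
  have hp3 : IsPartition (bump (i + 2) (bump (i + 1) (bump i c))) := bump_partition hp2 h3
  by_cases hb : c (i + 1) < c i
  · have hCb : SchurCond (i + 1) c := by
      intro j hj; rw [pnat_succ_inj hj]; exact hb
    have hpb := bump_partition hc hCb
    have h1' : SchurCond i (bump (i + 1) c) :=
      (schurCond_bump (ne_succ i).symm (by rw [succ_succ]; exact (ne_two i).symm) _).mpr h1
    have hpb1 : IsPartition (bump i (bump (i + 1) c)) := bump_partition hpb h1'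
    have h3' : SchurCond (i + 2) (bump i (bump (i + 1) c)) := by
      intro j hj
      rw [← succ_succ i] at hj
      rw [pnat_succ_inj hj]
      have hmono := hc.1 (i + 1)
      rw [succ_succ] at hmono
      simp only [bump, Function.update_apply]
      simp [succ_ne, ne_succ, two_ne, ne_two, two_ne_one, one_ne_two]
      omega
    have hpb2 : IsPartition (bump (i + 2) (bump i (bump (i + 1) c))) :=
      bump_partition hpb1 h3'
    have h4 : SchurCond (i + 1) (bump (i + 2) (bump (i + 1) (bump i c))) := by
      intro j hj
      rw [pnat_succ_inj hj]
      simp only [bump, Function.update_apply]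
      simp [succ_ne, ne_succ, two_ne, ne_two, two_ne_one, one_ne_two]
      omega
    have h4' : SchurCond (i + 1) (bump (i + 2) (bump i (bump (i + 1) c))) := by
      intro j hj
      rw [pnat_succ_inj hj]
      simp only [bump, Function.update_apply]
      simp [succ_ne, ne_succ, two_ne, ne_two, two_ne_one, one_ne_two]
      omega
    simp only [schurWord_cons, schurWord_nil, Option.bind_some,
      addBox_some hc h1, addBox_some hp1 h2, addBox_some hp2 h3, addBox_some hp3 h4,
      addBox_some hc hCb, addBox_some hpb h1', addBox_some hpb1 h3',
      addBox_some hpb2 h4']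
    congr 1
    funext j
    by_cases hja : j = i
    case pos =>
      simp [bump, Function.update_apply, hja, succ_ne, ne_succ, two_ne, ne_two,
        two_ne_one, one_ne_two]
    by_cases hjb : j = i + 1
    case pos =>
      simp [bump, Function.update_apply, hjb, succ_ne, ne_succ, two_ne, ne_two,
        two_ne_one, one_ne_two]
    by_cases hjc : j = i + 2
    case pos =>
      simp [bump, Function.update_apply, hjc, succ_ne, ne_succ, two_ne, ne_two,
        two_ne_one, one_ne_two]
    simp [bump, Function.update_apply, hja, hjb, hjc]
  · have h4 : ¬ SchurCond (i + 1) (bump (i + 2) (bump (i + 1) (bump i c))) := by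
      intro h
      have := h i rfl
      simp only [bump, Function.update_apply] at this
      simp [succ_ne, ne_succ, two_ne, ne_two, two_ne_one, one_ne_two] at this
      omega
    have hCb : ¬ SchurCond (i + 1) c := fun h => hb (h i rfl)
    simp [schurWord_cons, schurWord_nil, addBox_some hc h1, addBox_some hp1 h2,
      addBox_some hp2 h3, addBox_none hp3 h4, addBox_none hc hCb]

/-! ### Soundness of `JStep` and `JEquiv` -/

lemma jstep_sound {x y : List ℕ+} (h : JStep x y) :
    ∀ c : ℕ+ → ℕ, IsPartition c → schurWord x c = schurWord y c := by
  have main : ∀ (p s m m' : List ℕ+),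
      (∀ d : ℕ+ → ℕ, IsPartition d → schurWord m d = schurWord m' d) →
      ∀ c : ℕ+ → ℕ, IsPartition c →
        schurWord (p ++ m ++ s) c = schurWord (p ++ m' ++ s) c := by
    intro p s m m' hm c hc
    rw [List.append_assoc, List.append_assoc, schurWord_append p (m ++ s) c,
      schurWord_append p (m' ++ s) c, schurWord_append m s c, schurWord_append m' s c]
    cases hsc : schurWord s c with
    | none => rfl
    | some d =>
      have hd := schurWord_isPartition hsc hc
      simp only [Option.bind_some]
      rw [hm d hd]
  cases h with
  | comm p s a b hab => exact main p s _ _ (fun d hd => comm_sound hd a b hab)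
  | rel2 p s i => exact main p s _ _ (fun d hd => rel2_sound hd i)
  | rel3 p s i => exact main p s _ _ (fun d hd => rel3_sound hd i)
  | rel4 p s i => exact main p s _ _ (fun d hd => rel4_sound hd i)

lemma jequiv_sound {x y : List ℕ+} (h : JEquiv x y) :
    ∀ c : ℕ+ → ℕ, IsPartition c → schurWord x c = schurWord y c := by
  induction h with
  | rel x y h => exact jstep_sound h
  | refl x => intro c _; rfl
  | symm x y _ ih => intro c hc; exact (ih c hc).symm
  | trans x y z _ _ ih1 ih2 => intro c hc; exact (ih1 c hc).trans (ih2 c hc)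

/-! ### The congruence property and the inductive chain -/

lemma jstep_congr {x y : List ℕ+} (p s : List ℕ+) (h : JStep x y) :
    JStep (p ++ x ++ s) (p ++ y ++ s) := by
  cases h with
  | comm p' s' a b hab =>
    have := JStep.comm (p ++ p') (s' ++ s) a b hab
    simpa [List.append_assoc] using this
  | rel2 p' s' i =>
    have := JStep.rel2 (p ++ p') (s' ++ s) i
    simpa [List.append_assoc] using this
  | rel3 p' s' i =>
    have := JStep.rel3 (p ++ p') (s' ++ s) i
    simpa [List.append_assoc] using this
  | rel4 p' s' i =>
    have := JStep.rel4 (p ++ p') (s' ++ s) i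
    simpa [List.append_assoc] using this

lemma jequiv_congr {x y : List ℕ+} (p s : List ℕ+) (h : JEquiv x y) :
    JEquiv (p ++ x ++ s) (p ++ y ++ s) := by
  induction h with
  | rel x y h => exact Relation.EqvGen.rel _ _ (jstep_congr p s h)
  | refl x => exact Relation.EqvGen.refl _
  | symm x y _ ih => exact Relation.EqvGen.symm _ _ ih
  | trans x y z _ _ ih1 ih2 => exact Relation.EqvGen.trans _ _ _ ih1 ih2

lemma comm_two (i : ℕ+) : 2 ≤ |(((i + 2 : ℕ+) : ℕ) : ℤ) - (((i : ℕ+) : ℕ) : ℤ)| := by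
  push_cast
  rw [show ((i : ℕ) : ℤ) + 2 - ((i : ℕ) : ℤ) = 2 by ring]
  simp

lemma rep_shift {α : Type*} (m : ℕ) (x : α) (t : List α) :
    x :: (List.replicate m x ++ t) = List.replicate m x ++ x :: t := by
  induction m with
  | zero => rfl
  | succ n ih => simp [List.replicate_succ, ← ih]

lemma jequiv_chain (i : ℕ+) : ∀ m : ℕ,
    JEquiv ([i + 1] ++ List.replicate (m + 1) (i + 2) ++ [i + 1, i])
      ([i + 1] ++ List.replicate (m + 1) (i + 2) ++ [i, i + 1]) := by
  intro m
  induction m with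
  | zero =>
    exact Relation.EqvGen.rel _ _ (by simpa using JStep.rel4 [] [] i)
  | succ m ih =>
    have e1 : [i + 1] ++ List.replicate (m + 1 + 1) (i + 2) ++ [i + 1, i]
        = (i + 1) :: (List.replicate m (i + 2) ++ [i + 2, i + 2, i + 1, i]) := by
      simp [List.replicate_succ, rep_shift]
    have e2 : [i + 1] ++ List.replicate (m + 1 + 1) (i + 2) ++ [i, i + 1]
        = (i + 1) :: (List.replicate m (i + 2) ++ [i + 2, i + 2, i, i + 1]) := by
      simp [List.replicate_succ, rep_shift]
    rw [e1, e2]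
    have s1 : JStep ((i + 1) :: (List.replicate m (i + 2) ++ [i + 2, i + 2, i + 1, i]))
        ((i + 1) :: (List.replicate m (i + 2) ++ [i + 2, i + 1, i + 2, i])) := by
      have := JStep.rel3 ((i + 1) :: List.replicate m (i + 2)) [i] (i + 1)
      simpa [succ_succ, rep_shift] using this
    have s2 : JStep ((i + 1) :: (List.replicate m (i + 2) ++ [i + 2, i + 1, i + 2, i]))
        ((i + 1) :: (List.replicate m (i + 2) ++ [i + 2, i + 1, i, i + 2])) := by
      have := JStep.comm ((i + 1) :: (List.replicate m (i + 2) ++ [i + 2, i + 1])) []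
        (i + 2) i (comm_two i)
      simpa [rep_shift] using this
    have s3 : JEquiv ((i + 1) :: (List.replicate m (i + 2) ++ [i + 2, i + 1, i, i + 2]))
        ((i + 1) :: (List.replicate m (i + 2) ++ [i + 2, i, i + 1, i + 2])) := by
      have hih := jequiv_congr [] [i + 2] ih
      have eA : [] ++ ([i + 1] ++ List.replicate (m + 1) (i + 2) ++ [i + 1, i]) ++ [i + 2]
          = (i + 1) :: (List.replicate m (i + 2) ++ [i + 2, i + 1, i, i + 2]) := by
        simp [List.replicate_succ, rep_shift]
      have eB : [] ++ ([i + 1] ++ List.replicate (m + 1) (i + 2) ++ [i, i + 1]) ++ [i + 2]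
          = (i + 1) :: (List.replicate m (i + 2) ++ [i + 2, i, i + 1, i + 2]) := by
        simp [List.replicate_succ, rep_shift]
      rw [eA, eB] at hih
      exact hih
    have s4 : JStep ((i + 1) :: (List.replicate m (i + 2) ++ [i + 2, i, i + 1, i + 2]))
        ((i + 1) :: (List.replicate m (i + 2) ++ [i, i + 2, i + 1, i + 2])) := by
      have := JStep.comm ((i + 1) :: List.replicate m (i + 2)) [i + 1, i + 2]
        (i + 2) i (comm_two i)
      simpa [rep_shift] using this
    have s5 : JStep ((i + 1) :: (List.replicate m (i + 2) ++ [i, i + 2, i + 2, i + 1]))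
        ((i + 1) :: (List.replicate m (i + 2) ++ [i, i + 2, i + 1, i + 2])) := by
      have := JStep.rel3 ((i + 1) :: (List.replicate m (i + 2) ++ [i])) [] (i + 1)
      simpa [succ_succ, rep_shift] using this
    have s6 : JStep ((i + 1) :: (List.replicate m (i + 2) ++ [i + 2, i, i + 2, i + 1]))
        ((i + 1) :: (List.replicate m (i + 2) ++ [i, i + 2, i + 2, i + 1])) := by
      have := JStep.comm ((i + 1) :: List.replicate m (i + 2)) [i + 2, i + 1]
        (i + 2) i (comm_two i)
      simpa [rep_shift] using this
    have s7 : JStep ((i + 1) :: (List.replicate m (i + 2) ++ [i + 2, i + 2, i, i + 1]))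
        ((i + 1) :: (List.replicate m (i + 2) ++ [i + 2, i, i + 2, i + 1])) := by
      have := JStep.comm ((i + 1) :: (List.replicate m (i + 2) ++ [i + 2])) [i + 1]
        (i + 2) i (comm_two i)
      simpa [rep_shift] using this
    refine Relation.EqvGen.trans _ _ _ (Relation.EqvGen.rel _ _ s1) ?_
    refine Relation.EqvGen.trans _ _ _ (Relation.EqvGen.rel _ _ s2) ?_
    refine Relation.EqvGen.trans _ _ _ s3 ?_
    refine Relation.EqvGen.trans _ _ _ (Relation.EqvGen.rel _ _ s4) ?_
    refine Relation.EqvGen.trans _ _ _ (Relation.EqvGen.symm _ _ (Relation.EqvGen.rel _ _ s5)) ?_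
    refine Relation.EqvGen.trans _ _ _ (Relation.EqvGen.symm _ _ (Relation.EqvGen.rel _ _ s6)) ?_
    exact Relation.EqvGen.symm _ _ (Relation.EqvGen.rel _ _ s7)

end Aux

theorem stmt15 (i k : ℕ+) :
    (∀ c : ℕ+ → ℕ, IsPartition c →
      schurWord ([i + 1] ++ List.replicate (k : ℕ) (i + 2) ++ [i + 1, i]) c =
        schurWord ([i + 1] ++ List.replicate (k : ℕ) (i + 2) ++ [i, i + 1]) c) ∧
    JEquiv ([i + 1] ++ List.replicate (k : ℕ) (i + 2) ++ [i + 1, i])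
      ([i + 1] ++ List.replicate (k : ℕ) (i + 2) ++ [i, i + 1]) := by
  obtain ⟨m, hm⟩ : ∃ m : ℕ, (k : ℕ) = m + 1 := ⟨(k : ℕ) - 1, by have := k.pos; omega⟩
  rw [hm]
  have hJ := jequiv_chain i m
  exact ⟨jequiv_sound hJ, hJ⟩
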